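/- arXiv:cs/0607046 — 2 statements merged into one kernel-verified Lean document; each statement's English description precedes it below -/
import Mathlib

section
/- If list L of rectangles is r-homogenous to list L' (both lists use widths from the same finite set w_1 > w_2 > ... > w_q, and for each width w_i the total height of rectangles of width w_i in L is at least the total height in L' and at most r times it), then the optimal fractional strip packing heights satisfy OPT_FSP(L') ≤ OPT_FSP(L) ≤ r · OPT_FSP(L'). -/
/-!
A fractional strip packing only depends on the total height of each width. Given a packing
of `B` and a list `A` whose total height per width is at most that of `B`, cut the
rectangles of `A` horizontally and lay the pieces, greedily, into the rectangles of `B` of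
the same width: this packs a subdivision of `A` within the same height. Stretching a packing
vertically by `r` multiplies every total height per width by `r`. Hence every height
achievable for `L` is achievable for `L'`, and `r` times every height achievable for `L'`
is achievable for `L`.
-/

/-- A rectangle is a pair (width, height). A packing of list `L` into the
width-1 strip at height `H`: axis-parallel placements, no overlap. -/
structure StripPacking (L : List (ℝ × ℝ)) (H : ℝ) where
  pos : Fin L.length → ℝ × ℝ
  left : ∀ i, 0 ≤ (pos i).1
  right : ∀ i, (pos i).1 + (L.get i).1 ≤ 1
  bottom : ∀ i, 0 ≤ (pos i).2
  top : ∀ i, (pos i).2 + (L.get i).2 ≤ H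
  disjoint : ∀ i j, i ≠ j →
    (pos i).1 + (L.get i).1 ≤ (pos j).1 ∨ (pos j).1 + (L.get j).1 ≤ (pos i).1 ∨
    (pos i).2 + (L.get i).2 ≤ (pos j).2 ∨ (pos j).2 + (L.get j).2 ≤ (pos i).2

/-- `L'` is obtained from `L` by horizontal cuts: each rectangle `(w,h)` is
replaced by `(w,h₁),…,(w,h_k)` with `h = h₁+⋯+h_k`, all pieces positive. -/
def IsSubdivision (L L' : List (ℝ × ℝ)) : Prop :=
  ∃ css : List (List ℝ), css.length = L.length ∧
    (∀ p ∈ L.zip css, p.2.sum = p.1.2 ∧ ∀ hh ∈ p.2, 0 < hh) ∧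
    L' = (L.zip css).flatMap (fun p => p.2.map fun hh => (p.1.1, hh))

/-- Optimal fractional strip packing height of `L`. -/
noncomputable def OPTFSP (L : List (ℝ × ℝ)) : ℝ :=
  sInf {H | 0 ≤ H ∧ ∃ L', IsSubdivision L L' ∧ Nonempty (StripPacking L' H)}

/-- Total height of rectangles of width `w` in `L`. -/
noncomputable def heightAt (L : List (ℝ × ℝ)) (w : ℝ) : ℝ :=
  ((L.filter (fun R => R.1 = w)).map Prod.snd).sum

/-- `L` is `r`-homogenous to `L'`: both lists use widths from a common finite
set `W`, and for each `w ∈ W` the total height in `L` lies between the total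
height in `L'` and `r` times it. -/
def Homogenous (r : ℝ) (L L' : List (ℝ × ℝ)) : Prop :=
  ∃ W : Finset ℝ, (∀ R ∈ L, R.1 ∈ W) ∧ (∀ R ∈ L', R.1 ∈ W) ∧
    ∀ w ∈ W, heightAt L' w ≤ heightAt L w ∧ heightAt L w ≤ r * heightAt L' w

section heightAt

variable {L L₁ L₂ : List (ℝ × ℝ)} {w : ℝ}

@[simp] lemma heightAt_nil : heightAt [] w = 0 := rfl

lemma heightAt_cons (a : ℝ × ℝ) :
    heightAt (a :: L) w = (if a.1 = w then a.2 else 0) + heightAt L w := by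
  unfold heightAt
  split_ifs with h <;> simp [h]

lemma heightAt_append : heightAt (L₁ ++ L₂) w = heightAt L₁ w + heightAt L₂ w := by
  simp [heightAt, List.filter_append]

lemma heightAt_map_prodMk (v : ℝ) (hs : List ℝ) :
    heightAt (hs.map (v, ·)) w = if v = w then hs.sum else 0 := by
  induction hs with
  | nil => simp
  | cons t hs ih => rw [List.map_cons, heightAt_cons, ih]; split_ifs <;> simp

lemma heightAt_map_mul (r : ℝ) :
    heightAt (L.map fun R => (R.1, r * R.2)) w = r * heightAt L w := by
  induction L with
  | nil => simp
  | cons a L ih => simp only [List.map_cons, heightAt_cons, ih]; split_ifs <;> ring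

lemma heightAt_nonneg (hL : ∀ R ∈ L, 0 ≤ R.2) : 0 ≤ heightAt L w :=
  List.sum_nonneg (by simpa [heightAt] using fun x hx => hL (w, x) hx)

lemma heightAt_eq_zero (hL : ∀ R ∈ L, R.1 ≠ w) : heightAt L w = 0 := by
  rw [heightAt, List.filter_eq_nil_iff.2 fun R hR => by simpa using hL R hR]
  rfl

end heightAt

namespace IsSubdivision

variable {L A A' B B' : List (ℝ × ℝ)}

lemma append (hA : IsSubdivision A A') (hB : IsSubdivision B B') :
    IsSubdivision (A ++ B) (A' ++ B') := by
  obtain ⟨css, hlen, hcss, rfl⟩ := hA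
  obtain ⟨dss, hlen', hdss, rfl⟩ := hB
  refine ⟨css ++ dss, by simp [hlen, hlen'], ?_, ?_⟩
  · rw [List.zip_append hlen.symm]
    intro p hp
    rcases List.mem_append.1 hp with hp | hp
    exacts [hcss p hp, hdss p hp]
  · rw [List.zip_append hlen.symm, List.flatMap_append]

lemma singleton {a : ℝ × ℝ} {hs : List ℝ} (hsum : hs.sum = a.2) (hpos : ∀ t ∈ hs, 0 < t) :
    IsSubdivision [a] (hs.map (a.1, ·)) :=
  ⟨[hs], rfl, by simpa using ⟨hsum, hpos⟩, by simp⟩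

lemma refl (hL : ∀ R ∈ L, 0 < R.2) : IsSubdivision L L := by
  induction L with
  | nil => exact ⟨[], rfl, by simp, rfl⟩
  | cons a L ih =>
    simpa using (singleton (hs := [a.2]) (by simp) (by simpa using hL a (by simp))).append
      (ih fun R hR => hL R (List.mem_cons_of_mem a hR))

lemma heightAt_eq (h : IsSubdivision A A') (w : ℝ) : heightAt A' w = heightAt A w := by
  obtain ⟨css, hlen, hcss, rfl⟩ := h
  induction A generalizing css with
  | nil => simp_all
  | cons a A ih =>
    obtain _ | ⟨cs, css⟩ := css
    · simp at hlen
    simp only [List.zip_cons_cons, List.flatMap_cons, List.mem_cons, forall_eq_or_imp] at hcss ⊢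
    rw [heightAt_append, heightAt_map_prodMk, heightAt_cons, hcss.1.1,
      ih css (by simpa using hlen) hcss.2]

end IsSubdivision

/-- A rectangle of size `w × h` placed with its lower left corner at `(x, y)`. -/
structure Box where
  x : ℝ
  y : ℝ
  w : ℝ
  h : ℝ

namespace Box

def dims (b : Box) : ℝ × ℝ := (b.w, b.h)

def Separated (b c : Box) : Prop :=
  b.x + b.w ≤ c.x ∨ c.x + c.w ≤ b.x ∨ b.y + b.h ≤ c.y ∨ c.y + c.h ≤ b.y

def InStrip (H : ℝ) (b : Box) : Prop :=
  0 ≤ b.x ∧ b.x + b.w ≤ 1 ∧ 0 ≤ b.y ∧ b.y + b.h ≤ H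

def IsSubbox (b c : Box) : Prop :=
  c.x ≤ b.x ∧ b.x + b.w ≤ c.x + c.w ∧ c.y ≤ b.y ∧ b.y + b.h ≤ c.y + c.h

def scaleY (r : ℝ) (b : Box) : Box := ⟨b.x, r * b.y, b.w, r * b.h⟩

variable {b c d : Box} {H r : ℝ}

lemma Separated.symm (h : b.Separated c) : c.Separated b := by
  unfold Separated at *; tauto

lemma IsSubbox.refl (b : Box) : b.IsSubbox b :=
  ⟨le_rfl, le_rfl, le_rfl, le_rfl⟩

lemma IsSubbox.trans (hbc : b.IsSubbox c) (hcd : c.IsSubbox d) : b.IsSubbox d := by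
  unfold IsSubbox at *
  refine ⟨?_, ?_, ?_, ?_⟩ <;> linarith

lemma Separated.of_isSubbox_right (h : b.Separated c) (hdc : d.IsSubbox c) : b.Separated d := by
  unfold Separated IsSubbox at *
  rcases h with h | h | h | h
  exacts [.inl (by linarith), .inr (.inl (by linarith)), .inr (.inr (.inl (by linarith))),
    .inr (.inr (.inr (by linarith)))]

lemma Separated.of_isSubbox_left (h : b.Separated c) (hdb : d.IsSubbox b) : d.Separated c :=
  (h.symm.of_isSubbox_right hdb).symm

lemma Separated.of_forall_isSubbox {Q X : List Box} (hb : ∀ q ∈ Q, b.Separated q)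
    (hX : ∀ x ∈ X, ∃ q ∈ Q, x.IsSubbox q) (x : Box) (hx : x ∈ X) : b.Separated x :=
  let ⟨q, hq, hxq⟩ := hX x hx
  (hb q hq).of_isSubbox_right hxq

lemma forall_exists_isSubbox_cons {q : Box} {Q X : List Box}
    (hX : ∀ x ∈ X, ∃ q' ∈ Q, x.IsSubbox q') : ∀ x ∈ q :: X, ∃ q' ∈ q :: Q, x.IsSubbox q' := by
  intro x hx
  rcases List.mem_cons.1 hx with rfl | hx
  · exact ⟨x, List.mem_cons_self, .refl x⟩
  · obtain ⟨q', hq', hxq'⟩ := hX x hx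
    exact ⟨q', List.mem_cons_of_mem q hq', hxq'⟩

lemma InStrip.of_isSubbox (h : c.InStrip H) (hbc : b.IsSubbox c) : b.InStrip H := by
  unfold InStrip IsSubbox at *
  refine ⟨?_, ?_, ?_, ?_⟩ <;> linarith

lemma InStrip.mono (h : b.InStrip H) {H' : ℝ} (hH : H ≤ H') : b.InStrip H' :=
  ⟨h.1, h.2.1, h.2.2.1, h.2.2.2.trans hH⟩

lemma Separated.scaleY (hr : 0 ≤ r) (h : b.Separated c) : (b.scaleY r).Separated (c.scaleY r) := by
  unfold Separated Box.scaleY at *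
  rcases h with h | h | h | h
  exacts [.inl h, .inr (.inl h), .inr (.inr (.inl (by nlinarith))),
    .inr (.inr (.inr (by nlinarith)))]

lemma InStrip.scaleY (hr : 0 ≤ r) (h : b.InStrip H) : (b.scaleY r).InStrip (r * H) := by
  unfold InStrip Box.scaleY at *
  refine ⟨h.1, h.2.1, by nlinarith, by nlinarith⟩

end Box

open Box

def IsBoxPacking (H : ℝ) (Q : List Box) : Prop :=
  (∀ q ∈ Q, q.InStrip H) ∧ Q.Pairwise Separated

lemma nonempty_stripPacking_iff {L : List (ℝ × ℝ)} {H : ℝ} :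
    Nonempty (StripPacking L H) ↔ ∃ Q : List Box, Q.map dims = L ∧ IsBoxPacking H Q := by
  constructor
  · rintro ⟨P⟩
    refine ⟨List.ofFn fun i => ⟨(P.pos i).1, (P.pos i).2, (L.get i).1, (L.get i).2⟩, ?_, ?_, ?_⟩
    · simp [List.map_ofFn, Function.comp_def, dims]
    · simpa [List.mem_ofFn, InStrip] using fun i => ⟨P.left i, P.right i, P.bottom i, P.top i⟩
    · exact List.pairwise_ofFn.2 fun i j hij => P.disjoint i j hij.ne
  · rintro ⟨Q, rfl, hstrip, hsep⟩
    have hlen : (Q.map dims).length = Q.length := List.length_map _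
    let b (i : Fin (Q.map dims).length) : Box := Q.get (i.cast hlen)
    have hget (i) : (Q.map dims).get i = (b i).dims := by simp [b]
    have hb (i) : (b i).InStrip H := hstrip _ (List.get_mem _ _)
    refine ⟨⟨fun i => ((b i).x, (b i).y), fun i => (hb i).1, fun i => ?_, fun i => (hb i).2.2.1,
      fun i => ?_, fun i j hij => ?_⟩⟩
    · rw [hget]; exact (hb i).2.1
    · rw [hget]; exact (hb i).2.2.2
    · have hij' : i.cast hlen ≠ j.cast hlen := by simpa [Fin.ext_iff] using hij
      simp only [hget]
      rcases hij'.lt_or_gt with h | h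
      exacts [hsep.rel_get_of_lt h, (hsep.rel_get_of_lt h).symm]

lemma exists_isBoxPacking (L : List (ℝ × ℝ)) (hL : ∀ R ∈ L, R.1 ≤ 1 ∧ 0 ≤ R.2) :
    ∃ H, 0 ≤ H ∧ ∃ Q : List Box, Q.map dims = L ∧ IsBoxPacking H Q := by
  induction L with
  | nil => exact ⟨0, le_rfl, [], rfl, by simp [IsBoxPacking]⟩
  | cons a L ih =>
    obtain ⟨H, hH, Q, hQ, hstrip, hsep⟩ := ih fun R hR => hL R (List.mem_cons_of_mem a hR)
    have ha := hL a List.mem_cons_self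
    refine ⟨H + a.2, by linarith, ⟨0, H, a.1, a.2⟩ :: Q, by simp [hQ, dims], ?_, ?_⟩
    · simp only [List.mem_cons, forall_eq_or_imp]
      exact ⟨⟨le_rfl, by simpa using ha.1, hH, le_rfl⟩,
        fun q hq => (hstrip q hq).mono (by linarith)⟩
    · exact .cons (fun q hq => .inr (.inr (.inr (hstrip q hq).2.2.2))) hsep

/-- `P` are pieces of width `w` and total height `h` cut out of the boxes `Q`, and `Q'` is
what remains of `Q`. -/
structure IsCut (w h : ℝ) (Q P Q' : List Box) : Prop where
  pieces : ∀ p ∈ P, p.w = w ∧ 0 < p.h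
  sum_h : (P.map Box.h).sum = h
  pairwise : (P ++ Q').Pairwise Separated
  isSubbox : ∀ b ∈ P ++ Q', ∃ q ∈ Q, b.IsSubbox q
  heightAt_eq : ∀ v, heightAt ((w, h) :: Q'.map dims) v = heightAt (Q.map dims) v

namespace IsCut

variable {w h : ℝ} {q : Box} {Q P Q' : List Box}

lemma cons_skip (hc : IsCut w h Q P Q') (hq : ∀ x ∈ Q, q.Separated x) :
    IsCut w h (q :: Q) P (q :: Q') where
  pieces := hc.pieces
  sum_h := hc.sum_h
  pairwise := by
    rw [List.perm_middle.pairwise_iff fun h => h.symm]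
    exact .cons (Separated.of_forall_isSubbox hq hc.isSubbox) hc.pairwise
  isSubbox b hb := forall_exists_isSubbox_cons hc.isSubbox b (List.perm_middle.mem_iff.1 hb)
  heightAt_eq v := by
    have := hc.heightAt_eq v
    simp only [List.map_cons, heightAt_cons] at this ⊢
    linarith

lemma cons_take (hc : IsCut q.w (h - q.h) Q P Q') (hq0 : 0 < q.h)
    (hq : ∀ x ∈ Q, q.Separated x) : IsCut q.w h (q :: Q) (q :: P) Q' where
  pieces := by simpa using ⟨hq0, hc.pieces⟩
  sum_h := by simp [hc.sum_h]
  pairwise := .cons (Separated.of_forall_isSubbox hq hc.isSubbox) hc.pairwise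
  isSubbox := forall_exists_isSubbox_cons hc.isSubbox
  heightAt_eq v := by
    have := hc.heightAt_eq v
    simp only [List.map_cons, heightAt_cons, dims] at this ⊢
    split_ifs at this ⊢ <;> linarith

lemma cons_split (hh : 0 < h) (hle : h ≤ q.h) (hQ : (q :: Q).Pairwise Separated) :
    IsCut q.w h (q :: Q) [⟨q.x, q.y, q.w, h⟩] (⟨q.x, q.y + h, q.w, q.h - h⟩ :: Q) := by
  obtain ⟨hq, hQ⟩ := List.pairwise_cons.1 hQ
  have hbot : IsSubbox ⟨q.x, q.y, q.w, h⟩ q := ⟨le_rfl, le_rfl, le_rfl, by dsimp; linarith⟩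
  have htop : IsSubbox ⟨q.x, q.y + h, q.w, q.h - h⟩ q :=
    ⟨le_rfl, le_rfl, by dsimp; linarith, by dsimp; linarith⟩
  refine ⟨by simpa using hh, by simp, ?_, fun b hb => ?_, fun v => ?_⟩
  · rw [List.singleton_append]
    refine .cons ?_ (.cons (fun x hx => (hq x hx).of_isSubbox_left htop) hQ)
    simp only [List.mem_cons, forall_eq_or_imp]
    exact ⟨.inr (.inr (.inl le_rfl)), fun x hx => (hq x hx).of_isSubbox_left hbot⟩
  · simp only [List.singleton_append, List.mem_cons] at hb
    rcases hb with rfl | rfl | hb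
    exacts [⟨q, List.mem_cons_self, hbot⟩, ⟨q, List.mem_cons_self, htop⟩,
      ⟨b, List.mem_cons_of_mem q hb, .refl b⟩]
  · simp only [List.map_cons, heightAt_cons, dims]
    split_ifs <;> ring

lemma isSubdivision (hc : IsCut w h Q P Q') : IsSubdivision [(w, h)] (P.map dims) := by
  have hdims : P.map dims = (P.map Box.h).map (w, ·) := by
    simp only [List.map_map]
    exact List.map_congr_left fun p hp => by simp [dims, (hc.pieces p hp).1]
  rw [hdims]
  refine IsSubdivision.singleton hc.sum_h fun t ht => ?_
  obtain ⟨p, hp, rfl⟩ := List.mem_map.1 ht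
  exact (hc.pieces p hp).2

end IsCut

lemma exists_isCut (w : ℝ) (Q : List Box) (h : ℝ) (hh : 0 < h) (hQ : Q.Pairwise Separated)
    (hle : h ≤ heightAt (Q.map dims) w) : ∃ P Q', IsCut w h Q P Q' := by
  induction Q generalizing h with
  | nil => simp at hle; linarith
  | cons q Q ih =>
    have hq := (List.pairwise_cons.1 hQ).1
    have hQ' := (List.pairwise_cons.1 hQ).2
    simp only [List.map_cons, heightAt_cons, dims] at hle
    by_cases hskip : q.w ≠ w ∨ q.h ≤ 0
    · obtain ⟨P, Q', hc⟩ := ih h hh hQ' <| by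
        split_ifs at hle with hw
        · linarith [hskip.resolve_left (not_not.2 hw)]
        · linarith
      exact ⟨P, q :: Q', hc.cons_skip hq⟩
    rw [not_or, not_not, not_le] at hskip
    obtain ⟨rfl, hq0⟩ := hskip
    rcases lt_or_ge q.h h with hlt | hge
    · obtain ⟨P, Q', hc⟩ := ih (h - q.h) (by linarith) hQ' <| by
        simp only [if_true] at hle; linarith
      exact ⟨q :: P, Q', hc.cons_take hq0 hq⟩
    · exact ⟨_, _, IsCut.cons_split hh hge hQ⟩

lemma exists_isSubdivision_of_heightAt_le (A : List (ℝ × ℝ)) (hA : ∀ a ∈ A, 0 < a.2)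
    (Q : List Box) (hQ : Q.Pairwise Separated)
    (hAQ : ∀ w, heightAt A w ≤ heightAt (Q.map dims) w) :
    ∃ P : List Box, IsSubdivision A (P.map dims) ∧ P.Pairwise Separated ∧
      ∀ p ∈ P, ∃ q ∈ Q, p.IsSubbox q := by
  induction A generalizing Q with
  | nil => exact ⟨[], ⟨[], rfl, by simp, rfl⟩, .nil, by simp⟩
  | cons a A ih =>
    obtain ⟨w, h⟩ := a
    have hApos : ∀ R ∈ A, 0 < R.2 := fun R hR => hA R (List.mem_cons_of_mem _ hR)
    obtain ⟨Pa, Q', hcut⟩ := exists_isCut w Q h (hA _ List.mem_cons_self) hQ <| by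
      have := hAQ w
      rw [heightAt_cons, if_pos rfl] at this
      linarith [heightAt_nonneg (w := w) fun R hR => (hApos R hR).le]
    obtain ⟨hPa_sep, hQ'_sep, hcross⟩ := List.pairwise_append.1 hcut.pairwise
    obtain ⟨PA, hsubdiv, hPA_sep, hPA_sub⟩ := ih hApos Q' hQ'_sep fun v => by
      have := hAQ v
      rw [← hcut.heightAt_eq, heightAt_cons, heightAt_cons] at this
      linarith
    refine ⟨Pa ++ PA, by simpa using hcut.isSubdivision.append hsubdiv,
      List.pairwise_append.2 ⟨hPa_sep, hPA_sep, fun p hp => ?_⟩, fun p hp => ?_⟩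
    · exact Separated.of_forall_isSubbox (hcross p hp) hPA_sub
    · rcases List.mem_append.1 hp with hp | hp
      · exact hcut.isSubbox p (List.mem_append_left Q' hp)
      · obtain ⟨q', hq', hpq'⟩ := hPA_sub p hp
        obtain ⟨q, hq, hq'q⟩ := hcut.isSubbox q' (List.mem_append_right Pa hq')
        exact ⟨q, hq, hpq'.trans hq'q⟩

def fspHeights (L : List (ℝ × ℝ)) : Set ℝ :=
  {H | 0 ≤ H ∧ ∃ L', IsSubdivision L L' ∧ Nonempty (StripPacking L' H)}

lemma mem_fspHeights_iff {L : List (ℝ × ℝ)} {H : ℝ} :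
    H ∈ fspHeights L ↔
      0 ≤ H ∧ ∃ Q : List Box, IsSubdivision L (Q.map dims) ∧ IsBoxPacking H Q := by
  change (0 ≤ H ∧ _) ↔ _
  simp only [nonempty_stripPacking_iff]
  constructor
  · rintro ⟨hH, L', hsub, Q, rfl, hQ⟩
    exact ⟨hH, Q, hsub, hQ⟩
  · rintro ⟨hH, Q, hsub, hQ⟩
    exact ⟨hH, _, hsub, Q, rfl, hQ⟩

lemma fspHeights_nonempty {L : List (ℝ × ℝ)} (hL : ∀ R ∈ L, R.1 ≤ 1 ∧ 0 < R.2) :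
    (fspHeights L).Nonempty := by
  obtain ⟨H, hH, Q, rfl, hpack⟩ :=
    exists_isBoxPacking L fun R hR => ⟨(hL R hR).1, (hL R hR).2.le⟩
  exact ⟨H, mem_fspHeights_iff.2 ⟨hH, Q, .refl fun R hR => (hL R hR).2, hpack⟩⟩

lemma mul_mem_fspHeights {r H : ℝ} {A B : List (ℝ × ℝ)} (hr : 0 ≤ r) (hA : ∀ a ∈ A, 0 < a.2)
    (hAB : ∀ w, heightAt A w ≤ r * heightAt B w) (hH : H ∈ fspHeights B) :
    r * H ∈ fspHeights A := by
  obtain ⟨hH0, Q, hsub, hstrip, hsep⟩ := mem_fspHeights_iff.1 hH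
  have hscaled : (Q.map (scaleY r)).map dims = (Q.map dims).map fun R => (R.1, r * R.2) := by
    simp [Function.comp_def, dims, scaleY]
  obtain ⟨P, hsubA, hsepP, hPQ⟩ := exists_isSubdivision_of_heightAt_le A hA (Q.map (scaleY r))
    (List.pairwise_map.2 (hsep.imp (Separated.scaleY hr))) fun w => by
      rw [hscaled, heightAt_map_mul, hsub.heightAt_eq]; exact hAB w
  refine mem_fspHeights_iff.2 ⟨mul_nonneg hr hH0, P, hsubA, fun p hp => ?_, hsepP⟩
  obtain ⟨_, hq', hpq⟩ := hPQ p hp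
  obtain ⟨q, hq, rfl⟩ := List.mem_map.1 hq'
  exact ((hstrip q hq).scaleY hr).of_isSubbox hpq

lemma OPTFSP_le_mul {r : ℝ} {A B : List (ℝ × ℝ)} (hr : 0 ≤ r) (hA : ∀ a ∈ A, 0 < a.2)
    (hB : ∀ R ∈ B, R.1 ≤ 1 ∧ 0 < R.2) (hAB : ∀ w, heightAt A w ≤ r * heightAt B w) :
    OPTFSP A ≤ r * OPTFSP B := by
  change sInf (fspHeights A) ≤ r • sInf (fspHeights B)
  rw [← Real.sInf_smul_of_nonneg hr]
  refine csInf_le_csInf ⟨0, fun _ hH => hH.1⟩ ((fspHeights_nonempty hB).smul_set) ?_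
  rintro _ ⟨H, hH, rfl⟩
  exact mul_mem_fspHeights hr hA hAB hH

lemma Homogenous.heightAt_le {r : ℝ} {L L' : List (ℝ × ℝ)} (h : Homogenous r L L') (w : ℝ) :
    heightAt L' w ≤ heightAt L w ∧ heightAt L w ≤ r * heightAt L' w := by
  obtain ⟨W, hL, hL', hW⟩ := h
  by_cases hw : w ∈ W
  · exact hW w hw
  · rw [heightAt_eq_zero fun R hR h => hw (by rw [← h]; exact hL' R hR),
      heightAt_eq_zero fun R hR h => hw (by rw [← h]; exact hL R hR)]
    simp

/-- If `L` is `r`-homogenous to `L'` then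
`OPT_FSP(L') ≤ OPT_FSP(L) ≤ r · OPT_FSP(L')`. -/
theorem fsp_homogenous (r : ℝ) (hr : 1 ≤ r) (L L' : List (ℝ × ℝ))
    (hrect : ∀ R ∈ L, 0 < R.1 ∧ R.1 ≤ 1 ∧ 0 < R.2)
    (hrect' : ∀ R ∈ L', 0 < R.1 ∧ R.1 ≤ 1 ∧ 0 < R.2)
    (hhom : Homogenous r L L') :
    OPTFSP L' ≤ OPTFSP L ∧ OPTFSP L ≤ r * OPTFSP L' := by
  have hL : ∀ R ∈ L, R.1 ≤ 1 ∧ 0 < R.2 := fun R hR => (hrect R hR).2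
  have hL' : ∀ R ∈ L', R.1 ≤ 1 ∧ 0 < R.2 := fun R hR => (hrect' R hR).2
  constructor
  · simpa using OPTFSP_le_mul zero_le_one (fun R hR => (hL' R hR).2) hL fun w => by
      simpa using (hhom.heightAt_le w).1
  · exact OPTFSP_le_mul (by linarith) (fun R hR => (hL R hR).2) hL' fun w => (hhom.heightAt_le w).2
end

section
/- Fix ε ∈ (0,1) and r ∈ (0,1). Suppose rectangles with width at most ε are packed by the shelf algorithm NF_r: each rectangle of height h with r^{s+1} < h ≤ r^s is assigned height class s and packed by Next Fit into shelves of height r^s (a shelf is closed when the current rectangle's width does not fit in the remaining horizontal space). Then the total height of all closed shelves H_1 satisfies S > r·H_1·(1−ε), where S is the total area of all the rectangles packed into closed shelves. -/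
/-- Closed shelves of the shelf algorithm `NF_r` applied to narrow rectangles
(width at most `ε`): shelf `j` has class `s j` and height `r ^ s j`; it was
closed because the next narrow rectangle did not fit, so the total width of the
rectangles in it exceeds `1 - ε`, and each rectangle in it has height more than
`r * r ^ s j` (and width `≤ ε`, nonnegative).  Then the total area `S` of the
rectangles in closed shelves satisfies `S > r · H₁ · (1 - ε)`, where `H₁` is
the total height of all closed shelves. -/
theorem closed_shelves_area (ε r : ℝ) (hε : 0 < ε) (hε1 : ε < 1)
    (hr : 0 < r) (hr1 : r < 1)
    (N : ℕ) (s : Fin N → ℕ) (Rects : Fin N → List (ℝ × ℝ))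
    (hwidth : ∀ j, ∀ R ∈ Rects j, 0 < R.1 ∧ R.1 ≤ ε)
    (hheight : ∀ j, ∀ R ∈ Rects j, r * r ^ s j < R.2 ∧ R.2 ≤ r ^ s j)
    (hfull : ∀ j, 1 - ε < ((Rects j).map Prod.fst).sum)
    (S H₁ : ℝ)
    (hS : S = ∑ j : Fin N, ((Rects j).map (fun R => R.1 * R.2)).sum)
    (hH₁ : H₁ = ∑ j : Fin N, r ^ s j)
    (hN : 0 < N) :
    r * H₁ * (1 - ε) < S := by
  subst hS hH₁
  rw [Finset.mul_sum, Finset.sum_mul]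
  refine Finset.sum_lt_sum_of_nonempty ?_ ?_
  · exact Finset.univ_nonempty_iff.mpr ⟨⟨0, hN⟩⟩
  intro j _
  have hc : 0 < r * r ^ s j := by positivity
  calc r * r ^ s j * (1 - ε) < r * r ^ s j * ((Rects j).map Prod.fst).sum :=
        (mul_lt_mul_iff_right₀ hc).mpr (hfull j)
    _ ≤ ((Rects j).map (fun R => R.1 * R.2)).sum := by
        have : r * r ^ s j * ((Rects j).map Prod.fst).sum
            = ((Rects j).map (fun R => r * r ^ s j * R.1)).sum := by
          rw [List.sum_map_mul_left]
        rw [this]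
        apply List.sum_le_sum
        intro R hR
        have hw := hwidth j R hR
        have hh := hheight j R hR
        rw [mul_comm]
        exact mul_le_mul_of_nonneg_left hh.1.le hw.1.le
end
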